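/- arXiv:math/9604231 — 2 statements merged into one kernel-verified Lean document; each statement's English description precedes it below -/
import Mathlib

section
/- For 0 < δ < 1, the graph r = χ⁺(θ) = θ - h_ν^{-1}(θ) is invariant under the Suris map: if r = χ⁺(θ) then f_δ(θ,r) = (h_ν(θ), χ⁺(h_ν(θ))), where ν = (1-√δ)/(1+√δ). -/
noncomputable def h (ν θ : ℝ) : ℝ :=
  (2 / Real.pi) * Real.arctan
    (((ν + 1) * Real.tan (Real.pi * θ / 2) + (ν - 1)) /
     ((ν - 1) * Real.tan (Real.pi * θ / 2) + (ν + 1)))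

noncomputable def V' (ν θ : ℝ) : ℝ := h ν θ - 2 * θ + h (1/ν) θ

noncomputable def surisMap (ν : ℝ) (z : ℝ × ℝ) : ℝ × ℝ :=
  (z.1 + z.2 + V' ν z.1, z.2 + V' ν z.1)

lemma h_left_inv (ν : ℝ) (hν : 0 < ν) (hν1 : ν < 1) (θ : ℝ)
    (hθ : θ ∈ Set.Ioo (-(1/2) : ℝ) (1/2)) : h (1/ν) (h ν θ) = θ := by
  obtain ⟨hθl, hθr⟩ := hθ
  have hπ : (0:ℝ) < Real.pi := Real.pi_pos
  have hπne : Real.pi ≠ 0 := hπ.ne'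
  have hb1 : -(Real.pi/2) < Real.pi * θ / 2 := by nlinarith
  have hb2 : Real.pi * θ / 2 < Real.pi/2 := by nlinarith
  have hb1' : -(Real.pi/4) < Real.pi * θ / 2 := by nlinarith
  have hb2' : Real.pi * θ / 2 < Real.pi/4 := by nlinarith
  set t := Real.tan (Real.pi * θ / 2) with ht
  have htlt : t < 1 := by
    rw [ht, ← Real.tan_pi_div_four]
    exact Real.tan_lt_tan_of_lt_of_lt_pi_div_two hb1 (by linarith) hb2'
  have htgt : -1 < t := by
    have : Real.tan (-(Real.pi/4)) < t := by
      rw [ht]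
      exact Real.tan_lt_tan_of_lt_of_lt_pi_div_two (by linarith) hb2 hb1'
    simpa [Real.tan_neg, Real.tan_pi_div_four] using this
  have hD : 0 < (ν - 1) * t + (ν + 1) := by nlinarith
  set N := (ν + 1) * t + (ν - 1) with hN
  set D := (ν - 1) * t + (ν + 1) with hDdef
  have hDne : D ≠ 0 := hD.ne'
  have hνne : ν ≠ 0 := hν.ne'
  unfold h
  have harg : Real.pi * ((2 / Real.pi) * Real.arctan (N / D)) / 2
      = Real.arctan (N / D) := by field_simp
  rw [harg, Real.tan_arctan]
  have hden : (1/ν - 1) * (N / D) + (1/ν + 1) = 4 / D := by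
    rw [hN]; field_simp; rw [hDdef]; ring
  have hnum : (1/ν + 1) * (N / D) + (1/ν - 1) = 4 * t / D := by
    rw [hN]; field_simp; rw [hDdef]; ring
  rw [hnum, hden]
  have : 4 * t / D / (4 / D) = t := by field_simp
  rw [this, ht, Real.arctan_tan hb1 hb2]
  field_simp

theorem saddle_connection_plus (δ : ℝ) (hδ : 0 < δ) (hδ1 : δ < 1)
    (θ r : ℝ) (hθ : θ ∈ Set.Ioo (-(1/2) : ℝ) (1/2)) :
    let ν := (1 - Real.sqrt δ) / (1 + Real.sqrt δ)
    r = θ - h (1/ν) θ →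
      surisMap ν (θ, r) = (h ν θ, h ν θ - h (1/ν) (h ν θ)) := by
  intro ν hr
  have hs0 : 0 < Real.sqrt δ := Real.sqrt_pos.mpr hδ
  have hs1 : Real.sqrt δ < 1 := by
    have := Real.sqrt_lt_sqrt hδ.le hδ1
    simpa using this
  have hν : 0 < ν := div_pos (by linarith) (by linarith)
  have hν1 : ν < 1 := (div_lt_one (by linarith)).mpr (by linarith)
  have hinv : h (1/ν) (h ν θ) = θ := h_left_inv ν hν hν1 θ hθ
  simp only [surisMap, V', hr, hinv]
  exact Prod.ext (by ring) (by ring)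
end

section
/- For 0 < δ < 1, the graph r = χ⁻(θ) = θ - h_ν(θ) is invariant under the Suris map: if r = χ⁻(θ) then f_δ(θ,r) = (h_ν^{-1}(θ), χ⁻(h_ν^{-1}(θ))), where ν = (1-√δ)/(1+√δ). -/
open Real in
lemma h_inv_key (ν : ℝ) (hν0 : 0 < ν) (hν1 : ν < 1) (θ : ℝ)
    (hθ : θ ∈ Set.Ioo (-(1/2) : ℝ) (1/2)) : h ν (h (1/ν) θ) = θ := by
  obtain ⟨hθ1, hθ2⟩ := hθ
  have hπ := Real.pi_pos
  set t := Real.tan (π * θ / 2) with ht_def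
  have hlt1 : π * θ / 2 < π / 4 := by nlinarith
  have hgt1 : -(π / 4) < π * θ / 2 := by nlinarith
  have ht2 : t < 1 := by
    rw [show (1 : ℝ) = Real.tan (π / 4) from (Real.tan_pi_div_four).symm]
    exact Real.tan_lt_tan_of_lt_of_lt_pi_div_two (by linarith) (by linarith) hlt1
  have ht1 : -1 < t := by
    rw [show (-1 : ℝ) = Real.tan (-(π / 4)) from by
      rw [Real.tan_neg, Real.tan_pi_div_four]]
    exact Real.tan_lt_tan_of_lt_of_lt_pi_div_two (by linarith) (by linarith) hgt1
  have hd1 : 0 < (1 - ν) * t + (1 + ν) := by nlinarith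
  set x := ((1 + ν) * t + (1 - ν)) / ((1 - ν) * t + (1 + ν)) with hx_def
  have hx2 : x < 1 := by
    rw [hx_def, div_lt_one hd1]; nlinarith
  have hx1 : -1 < x := by
    rw [hx_def, neg_lt, ← neg_div, div_lt_one hd1]; nlinarith
  have hstep1 : h (1/ν) θ = (2 / π) * Real.arctan x := by
    unfold h
    have hden : (0:ℝ) < (1/ν - 1) * t + (1/ν + 1) := by
      have : (1/ν - 1) * t + (1/ν + 1) = ((1 - ν) * t + (1 + ν)) / ν := by
        field_simp
      rw [this]; positivity
    congr 2
    rw [← ht_def, hx_def, div_eq_div_iff hden.ne' hd1.ne']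
    field_simp
  have htan : Real.tan (π * ((2 / π) * Real.arctan x) / 2) = x := by
    rw [show π * ((2 / π) * Real.arctan x) / 2 = Real.arctan x from by
      field_simp]
    exact Real.tan_arctan x
  have hd2 : 0 < (ν - 1) * x + (ν + 1) := by nlinarith
  have hstep2 : ((ν + 1) * x + (ν - 1)) / ((ν - 1) * x + (ν + 1)) = t := by
    rw [div_eq_iff hd2.ne', hx_def]
    have hD : t * (1 - ν) + (1 + ν) ≠ 0 := by nlinarith
    field_simp
    ring
  rw [hstep1]
  unfold h
  rw [htan, hstep2, ht_def, Real.arctan_tan (by linarith) (by linarith)]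
  field_simp

theorem saddle_connection_minus (δ : ℝ) (hδ : 0 < δ) (hδ1 : δ < 1)
    (θ r : ℝ) (hθ : θ ∈ Set.Ioo (-(1/2) : ℝ) (1/2)) :
    let ν := (1 - Real.sqrt δ) / (1 + Real.sqrt δ)
    r = θ - h ν θ →
      surisMap ν (θ, r) = (h (1/ν) θ, h (1/ν) θ - h ν (h (1/ν) θ)) := by
  intro ν hr
  have hs0 : 0 < Real.sqrt δ := Real.sqrt_pos.mpr hδ
  have hs1 : Real.sqrt δ < 1 := by
    rw [show (1:ℝ) = Real.sqrt 1 from (Real.sqrt_one).symm]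
    exact Real.sqrt_lt_sqrt hδ.le hδ1
  have hν0 : 0 < ν := div_pos (by linarith) (by linarith)
  have hν1 : ν < 1 := by
    rw [div_lt_one (by linarith)]; linarith
  have hkey : h ν (h (1/ν) θ) = θ := h_inv_key ν hν0 hν1 θ hθ
  subst hr
  simp only [surisMap, V', Prod.mk.injEq]
  constructor
  · ring
  · rw [hkey]; ring
end
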